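/- Under the Ewens–Pitman weight system, for every integer x with 0 ≤ x ≤ min(j, m), the conditional probability that exactly x old blocks are re-observed satisfies P[R = x | π] = (1/(θ+n)_{m↑})·(−1)^j·Σ_{v=j−x}^{j} binom(v, j−x)·(−1)^{v+x}·Σ_{{c_1,…,c_v}∈C_{j,v}} (θ + n − Σ_{i=1}^{v} n_{c_i} + σv)_{m↑}; moreover this probability is strictly positive. -/

import Mathlib

open Finset

attribute [local instance] Classical.propDecidable

noncomputable section

/-- Rising factorial `x(x+1)⋯(x+N−1)`. -/
def risingFac (x : ℝ) (N : ℕ) : ℝ := ∏ i ∈ Finset.range N, (x + i)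

/-- Falling factorial `x(x−1)⋯(x−N+1)`. -/
def fallingFac (x : ℝ) (N : ℕ) : ℝ := ∏ i ∈ Finset.range N, (x - i)

/-- Noncentral generalized factorial coefficient `C(N,k;σ,γ)`. -/
def gfc (N k : ℕ) (σ γ : ℝ) : ℝ :=
  (1 / (Nat.factorial k : ℝ)) *
    ∑ i ∈ Finset.range (k + 1),
      (-1 : ℝ) ^ i * (Nat.choose k i : ℝ) * risingFac (-(i : ℝ) * σ - γ) N

/-- Central generalized factorial coefficient `C(N,k;σ)`. -/
def cgfc (N k : ℕ) (σ : ℝ) : ℝ := gfc N k σ 0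

/-- Binomial coefficient over `ℤ`, zero unless `0 ≤ b ≤ a`. -/
def ibinom (a b : ℤ) : ℝ :=
  if 0 ≤ b ∧ b ≤ a then (Nat.choose a.toNat b.toNat : ℝ) else 0

/-- Multinomial coefficient `m!/((l!)^r (m−rl)!)`, zero if `rl > m`. -/
def multinom (m l r : ℕ) : ℝ :=
  if r * l ≤ m then
    (Nat.factorial m : ℝ) / ((Nat.factorial l : ℝ) ^ r * (Nat.factorial (m - r * l) : ℝ))
  else 0

/-- `P` is a set partition of the finset `s`. -/
def IsPartOn {α : Type*} (s : Finset α) (P : Finset (Finset α)) : Prop :=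
  (∀ B ∈ P, B ⊆ s) ∧ ∅ ∉ P ∧ ∀ a ∈ s, ∃! B, B ∈ P ∧ a ∈ B

/-- Restriction of a partition to `s`. -/
def restrictPart {α : Type*} [DecidableEq α] (P : Finset (Finset α)) (s : Finset α) :
    Finset (Finset α) := (P.image fun C => C ∩ s).erase ∅

/-- Gibbs probability of a partition with block sizes `|C|` and `VN k` the Gibbs weight. -/
def gibbsW {α : Type*} (σ : ℝ) (VN : ℕ → ℝ) (P : Finset (Finset α)) : ℝ :=
  VN P.card * ∏ C ∈ P, risingFac (1 - σ) (C.card - 1)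

/-- Ewens–Pitman weight system. -/
def EPV (σ θ : ℝ) : ℕ → ℕ → ℝ :=
  fun N k => (∏ i ∈ Finset.range k, (θ + (i : ℝ) * σ)) / risingFac θ N

/-- The "old" elements `{1,…,n}` inside `{1,…,n+m}`. -/
def oldSet (n m : ℕ) : Finset (Fin (n + m)) :=
  Finset.univ.filter fun x => (x : ℕ) < n

/-- Number of new elements in the block of `ρ` containing the old block `Bi`. -/
def Scount (n m : ℕ) (Bi : Finset (Fin (n + m))) (ρ : Finset (Finset (Fin (n + m)))) : ℕ :=
  ∑ C ∈ ρ.filter (fun C => Bi ⊆ C), (C \ oldSet n m).card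

/-- Partitions of `{1,…,n+m}` extending the partition `πP` of the old elements. -/
def extensions (n m : ℕ) (πP : Finset (Finset (Fin (n + m)))) :
    Finset (Finset (Finset (Fin (n + m)))) :=
  Finset.univ.filter fun ρ => IsPartOn Finset.univ ρ ∧ restrictPart ρ (oldSet n m) = πP

/-- Conditional expectation given complete information (the initial partition `πP`). -/
def condExpPi (σ : ℝ) (V : ℕ → ℕ → ℝ) (n m : ℕ) (πP : Finset (Finset (Fin (n + m))))
    (f : Finset (Finset (Fin (n + m))) → ℝ) : ℝ :=
  (∑ ρ ∈ extensions n m πP, f ρ * gibbsW σ (V (n + m)) ρ) /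
    (∑ ρ ∈ extensions n m πP, gibbsW σ (V (n + m)) ρ)

/-- Partitions of `{1,…,n+m}` whose restriction to the old elements has exactly `j` blocks. -/
def withJ (n m j : ℕ) : Finset (Finset (Finset (Fin (n + m)))) :=
  Finset.univ.filter fun ρ =>
    IsPartOn Finset.univ ρ ∧ (restrictPart ρ (oldSet n m)).card = j

/-- Partitions of `s` with exactly `j` blocks. -/
def partsJOf {α : Type*} [Fintype α] (s : Finset α) (j : ℕ) :
    Finset (Finset (Finset α)) :=
  Finset.univ.filter fun π' => IsPartOn s π' ∧ π'.card = j

/-- Conditional expectation given the incomplete information `K_n = j`. -/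
def condExpK (σ : ℝ) (V : ℕ → ℕ → ℝ) (n m j : ℕ)
    (f : Finset (Finset (Fin (n + m))) → ℝ) : ℝ :=
  (∑ ρ ∈ withJ n m j, f ρ * gibbsW σ (V (n + m)) ρ) /
    (∑ π' ∈ partsJOf (oldSet n m) j, gibbsW σ (V n) π')

/-- Number of old blocks (indexed by `B`) re-observed in the additional sample. -/
def RcntB (n m j : ℕ) (B : Fin j → Finset (Fin (n + m)))
    (ρ : Finset (Finset (Fin (n + m)))) : ℕ :=
  (Finset.univ.filter fun i : Fin j => Scount n m (B i) ρ ≠ 0).card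

/-- Number of old blocks (indexed by `B`) re-observed with frequency `l`. -/
def RlcntB (n m j l : ℕ) (B : Fin j → Finset (Fin (n + m)))
    (ρ : Finset (Finset (Fin (n + m)))) : ℕ :=
  (Finset.univ.filter fun i : Fin j => Scount n m (B i) ρ = l).card

/-- Number of blocks of the restriction whose containing block has a new element. -/
def Rcnt (n m : ℕ) (ρ : Finset (Finset (Fin (n + m)))) : ℕ :=
  ((restrictPart ρ (oldSet n m)).filter fun Bi =>
    ∃ C ∈ ρ, Bi ⊆ C ∧ (C \ oldSet n m) ≠ ∅).card

/-- Number of blocks of the restriction whose containing block has exactly `l` new elements. -/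
def Rlcnt (n m l : ℕ) (ρ : Finset (Finset (Fin (n + m)))) : ℕ :=
  ((restrictPart ρ (oldSet n m)).filter fun Bi =>
    ∃ C ∈ ρ, Bi ⊆ C ∧ (C \ oldSet n m).card = l).card

/-- Number of bijections from `Fin j` onto the blocks of `π'` satisfying `Q`. -/
def bijCount {α : Type*} [Fintype α] (j : ℕ) (π' : Finset (Finset α))
    (Q : (Fin j → Finset α) → Prop) : ℕ :=
  ((Finset.univ : Finset (Fin j → Finset α)).filter fun β =>
    Function.Injective β ∧ Finset.image β Finset.univ = π' ∧ Q β).card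

/-- Conditional expectation given almost-complete information. -/
def condExpTau (σ : ℝ) (V : ℕ → ℕ → ℝ) (n m j p : ℕ) (τ : Fin p → Fin j) (nτ : Fin p → ℕ)
    (f : Finset (Finset (Fin (n + m))) → ℝ) : ℝ :=
  (∑ ρ ∈ withJ n m j,
      (bijCount j (restrictPart ρ (oldSet n m)) (fun β => ∀ i, (β (τ i)).card = nτ i) : ℝ) *
        f ρ * gibbsW σ (V (n + m)) ρ) /
    (∑ π' ∈ partsJOf (oldSet n m) j,
      (bijCount j π' (fun β => ∀ i, (β (τ i)).card = nτ i) : ℝ) * gibbsW σ (V n) π')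

/-! Under the Ewens–Pitman weights the extensions of `π` are generated by seating the new elements
`n+1, …, n+m` one at a time (Chinese restaurant process): a new element opens a new block with
weight `θ + kσ` (`k` the current number of blocks) or joins a block `C` with weight `|C| - σ`.
If the blocks `B_i`, `i ∈ c`, are closed, the weights of the admissible choices at step `t` add
up to `θ + n - ∑_{i ∈ c} n_i + σ|c| + t` whatever has happened before, so the extensions leaving
these blocks untouched carry total weight `w(π) (θ + n - ∑_{i ∈ c} n_i + σ|c|)_{m↑}`. The law of
`R` follows by inclusion–exclusion over the set of blocks that are not re-observed. Positivity
comes from an explicit extension in which `B_0, …, B_{x-1}` receive one new element each and the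
remaining new elements form one fresh block. -/

lemma risingFac_zero (x : ℝ) : risingFac x 0 = 1 := prod_range_zero _

lemma risingFac_succ (x : ℝ) (N : ℕ) : risingFac x (N + 1) = risingFac x N * (x + N) :=
  prod_range_succ _ _

lemma risingFac_succ' (x : ℝ) (N : ℕ) : risingFac x (N + 1) = risingFac (x + 1) N * x := by
  simp only [risingFac, prod_range_succ', Nat.cast_add, Nat.cast_one, Nat.cast_zero, add_zero]
  congr 1
  exact prod_congr rfl fun i _ => by ring

lemma risingFac_pos {x : ℝ} (hx : 0 < x) (N : ℕ) : 0 < risingFac x N :=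
  prod_pos fun i _ => by positivity

lemma risingFac_ne_zero {x : ℝ} (hx : x ≠ 0) (hx1 : -1 < x) (N : ℕ) : risingFac x N ≠ 0 := by
  cases N with
  | zero => simp [risingFac_zero]
  | succ N =>
    rw [risingFac_succ']
    exact mul_ne_zero (risingFac_pos (by linarith) N).ne' hx

section EwensPitman

variable {σ θ : ℝ}

lemma EPV_pos (hσ0 : 0 ≤ σ) (hσ1 : σ ≤ 1) (hθ : -σ < θ) (hθ0 : θ ≠ 0) {N k : ℕ}
    (hN : N ≠ 0) (hk : k ≠ 0) : 0 < EPV σ θ N k := by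
  obtain ⟨N, rfl⟩ := Nat.exists_eq_succ_of_ne_zero hN
  obtain ⟨k, rfl⟩ := Nat.exists_eq_succ_of_ne_zero hk
  rw [EPV, risingFac_succ', prod_range_succ', Nat.cast_zero, zero_mul, add_zero,
    mul_div_mul_right _ _ hθ0]
  refine div_pos (prod_pos fun i _ => ?_) (risingFac_pos (by linarith) N)
  have : σ ≤ ((i + 1 : ℕ) : ℝ) * σ := le_mul_of_one_le_left hσ0 (by norm_cast; omega)
  linarith

/-- `gibbsW σ (EPV σ θ N) ρ * (θ)_{N↑}`, which does not depend on `N`. -/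
def epWeight {α : Type*} (σ θ : ℝ) (ρ : Finset (Finset α)) : ℝ :=
  (∏ i ∈ range ρ.card, (θ + i * σ)) * ∏ C ∈ ρ, risingFac (1 - σ) (C.card - 1)

lemma gibbsW_EPV {α : Type*} (N : ℕ) (ρ : Finset (Finset α)) :
    gibbsW σ (EPV σ θ N) ρ = epWeight σ θ ρ / risingFac θ N := by
  simp only [gibbsW, EPV, epWeight, div_mul_eq_mul_div]

lemma prod_risingFac_one_sub_pos {α : Type*} (hσ1 : σ < 1) (ρ : Finset (Finset α)) :
    0 < ∏ C ∈ ρ, risingFac (1 - σ) (C.card - 1) :=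
  prod_pos fun _ _ => risingFac_pos (by linarith) _

lemma EPV_theta_zero {N k : ℕ} (hk : k ≠ 0) : EPV σ 0 N k = 0 := by
  rw [EPV, prod_eq_zero (mem_range.2 (Nat.pos_of_ne_zero hk)) (by simp), zero_div]

variable (hσ0 : 0 ≤ σ) (hσ1 : σ < 1) (hθ : -σ < θ) (hθ0 : θ ≠ 0)
include hσ0 hσ1 hθ hθ0

lemma gibbsW_EPV_pos {α : Type*} {N : ℕ} (hN : N ≠ 0) {ρ : Finset (Finset α)} (hρ : ρ.Nonempty) :
    0 < gibbsW σ (EPV σ θ N) ρ :=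
  mul_pos (EPV_pos hσ0 hσ1.le hθ hθ0 hN hρ.card_ne_zero) (prod_risingFac_one_sub_pos hσ1 ρ)

lemma epWeight_ne_zero {α : Type*} {ρ : Finset (Finset α)} (hρ : ρ.Nonempty) :
    epWeight σ θ ρ ≠ 0 := by
  have hpos := gibbsW_EPV_pos hσ0 hσ1 hθ hθ0 one_ne_zero hρ
  rw [gibbsW_EPV] at hpos
  exact fun h => hpos.ne' (by rw [h, zero_div])

end EwensPitman

namespace IsPartOn

variable {α : Type*} {S : Finset α} {ρ : Finset (Finset α)} {C D : Finset α} {a : α}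

lemma subset_of_mem (h : IsPartOn S ρ) (hC : C ∈ ρ) : C ⊆ S := h.1 C hC

lemma nonempty_of_mem (h : IsPartOn S ρ) (hC : C ∈ ρ) : C.Nonempty :=
  nonempty_iff_ne_empty.2 fun hC0 => h.2.1 (hC0 ▸ hC)

lemma exists_mem (h : IsPartOn S ρ) (ha : a ∈ S) : ∃ C ∈ ρ, a ∈ C :=
  (h.2.2 a ha).exists

lemma eq_of_mem_of_mem (h : IsPartOn S ρ) (hC : C ∈ ρ) (hD : D ∈ ρ) (haC : a ∈ C)
    (haD : a ∈ D) : C = D :=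
  (h.2.2 a (h.subset_of_mem hC haC)).unique ⟨hC, haC⟩ ⟨hD, haD⟩

lemma eq_of_subset (h : IsPartOn S ρ) (hC : C ∈ ρ) (hD : D ∈ ρ) (hCD : C ⊆ D) : C = D :=
  have ⟨_, ha⟩ := h.nonempty_of_mem hC
  h.eq_of_mem_of_mem hC hD ha (hCD ha)

lemma filter_subset_eq_singleton {b : Finset α} (h : IsPartOn S ρ) (hC : C ∈ ρ)
    (hb : b.Nonempty) (hbC : b ⊆ C) : ρ.filter (b ⊆ ·) = {C} := by
  obtain ⟨a, ha⟩ := hb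
  ext D
  simp only [mem_filter, mem_singleton]
  exact ⟨fun ⟨hD, hbD⟩ => h.eq_of_mem_of_mem hD hC (hbD ha) (hbC ha), fun hDC => hDC ▸ ⟨hC, hbC⟩⟩

lemma nonempty (h : IsPartOn S ρ) (hS : S.Nonempty) : ρ.Nonempty :=
  have ⟨_, ha⟩ := hS
  have ⟨C, hC, _⟩ := h.exists_mem ha
  ⟨C, hC⟩

lemma sum_card [DecidableEq α] (h : IsPartOn S ρ) : ∑ C ∈ ρ, C.card = S.card := by
  rw [← card_biUnion fun C hC D hD hCD =>
    disjoint_left.2 fun a haC haD => hCD (h.eq_of_mem_of_mem hC hD haC haD)]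
  congr 1
  ext a
  simp only [mem_biUnion]
  exact ⟨fun ⟨C, hC, ha⟩ => h.subset_of_mem hC ha, h.exists_mem⟩

end IsPartOn

section Restriction

variable {α : Type*} [DecidableEq α] {s : Finset α} {ρ : Finset (Finset α)} {D : Finset α}

lemma mem_restrictPart : D ∈ restrictPart ρ s ↔ D ≠ ∅ ∧ ∃ C ∈ ρ, C ∩ s = D := by
  simp [restrictPart]

lemma restrictPart_eq_self (h : IsPartOn s ρ) : restrictPart ρ s = ρ := by
  ext D
  rw [mem_restrictPart]
  constructor
  · rintro ⟨-, C, hC, rfl⟩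
    rwa [inter_eq_left.2 (h.subset_of_mem hC)]
  · exact fun hD => ⟨(h.nonempty_of_mem hD).ne_empty, D, hD, inter_eq_left.2 (h.subset_of_mem hD)⟩

lemma restrictPart_insert_erase {C : Finset α} (hC : C ∈ insert ∅ ρ) (hD : D ∩ s = C ∩ s) :
    restrictPart (insert D (ρ.erase C)) s = restrictPart ρ s := by
  ext E
  simp only [mem_restrictPart, mem_insert, mem_erase, exists_eq_or_imp, hD]
  rcases mem_insert.1 hC with rfl | hC
  · simp only [empty_inter]
    constructor
    · rintro ⟨hE, rfl | ⟨C, ⟨-, hC⟩, rfl⟩⟩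
      exacts [absurd rfl hE, ⟨hE, C, hC, rfl⟩]
    · rintro ⟨hE, C, hC, rfl⟩
      by_cases hC0 : C = ∅
      · simp [hC0] at hE
      · exact ⟨hE, Or.inr ⟨C, ⟨hC0, hC⟩, rfl⟩⟩
  · constructor
    · rintro ⟨hE, rfl | ⟨C', ⟨-, hC'⟩, rfl⟩⟩
      exacts [⟨hE, C, hC, rfl⟩, ⟨hE, C', hC', rfl⟩]
    · rintro ⟨hE, C', hC', rfl⟩
      by_cases hC'C : C' = C
      · exact ⟨hE, Or.inl (hC'C ▸ rfl)⟩
      · exact ⟨hE, Or.inr ⟨C', ⟨hC'C, hC'⟩, rfl⟩⟩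

end Restriction

section Insertion

variable {α : Type*} [DecidableEq α] {s S : Finset α} {ρ : Finset (Finset α)} {C : Finset α}
  {a e : α}

lemma isPartOn_restrictPart (h : IsPartOn S ρ) (hs : s ⊆ S) : IsPartOn s (restrictPart ρ s) := by
  refine ⟨fun D hD => ?_, fun h0 => (mem_restrictPart.1 h0).1 rfl, fun a ha => ?_⟩
  · obtain ⟨-, C, -, rfl⟩ := mem_restrictPart.1 hD
    exact inter_subset_right
  · obtain ⟨C, hC, haC⟩ := h.exists_mem (hs ha)
    refine ⟨C ∩ s, ⟨mem_restrictPart.2 ⟨ne_empty_of_mem (mem_inter.2 ⟨haC, ha⟩), C, hC, rfl⟩,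
      mem_inter.2 ⟨haC, ha⟩⟩, ?_⟩
    rintro D ⟨hD, haD⟩
    obtain ⟨-, C', hC', rfl⟩ := mem_restrictPart.1 hD
    rw [h.eq_of_mem_of_mem hC' hC (mem_inter.1 haD).1 haC]

def blockOf (ρ : Finset (Finset α)) (a : α) : Finset α := (ρ.filter (a ∈ ·)).sup id

lemma IsPartOn.blockOf_eq (h : IsPartOn S ρ) (hC : C ∈ ρ) (ha : a ∈ C) : blockOf ρ a = C := by
  have hfilter : ρ.filter (a ∈ ·) = {C} := by
    simpa only [singleton_subset_iff] using
      h.filter_subset_eq_singleton hC (singleton_nonempty a) (singleton_subset_iff.2 ha)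
  rw [blockOf, hfilter, sup_singleton, id]

/-- `C = ∅` encodes opening the new block `{e}`. -/
def insertIntoBlock (e : α) (ρ : Finset (Finset α)) (C : Finset α) : Finset (Finset α) :=
  insert (insert e C) (ρ.erase C)

lemma isPartOn_insertIntoBlock (h : IsPartOn S ρ) (he : e ∉ S) (hC : C ∈ insert ∅ ρ) :
    IsPartOn (insert e S) (insertIntoBlock e ρ C) := by
  have hCS : C ⊆ S := by
    rcases mem_insert.1 hC with rfl | hC
    exacts [empty_subset S, h.subset_of_mem hC]
  have heρ : ∀ D ∈ ρ, e ∉ D := fun D hD heD => he (h.subset_of_mem hD heD)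
  have hdisj : ∀ D ∈ ρ.erase C, ∀ a ∈ insert e C, a ∉ D := by
    intro D hD a haC haD
    obtain ⟨hDC, hD⟩ := mem_erase.1 hD
    rcases mem_insert.1 haC with rfl | haC
    · exact heρ D hD haD
    · have hCρ : C ∈ ρ := (mem_insert.1 hC).resolve_left (ne_empty_of_mem haC)
      exact hDC (h.eq_of_mem_of_mem hD hCρ haD haC)
  refine ⟨fun D hD => ?_, fun h0 => ?_, fun a ha => ?_⟩
  · rcases mem_insert.1 hD with rfl | hD
    · exact insert_subset_insert e hCS
    · exact (h.subset_of_mem (mem_of_mem_erase hD)).trans (subset_insert e S)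
  · rcases mem_insert.1 h0 with h0 | h0
    exacts [insert_ne_empty e C h0.symm, h.2.1 (mem_of_mem_erase h0)]
  · by_cases haC : a ∈ insert e C
    · refine ⟨insert e C, ⟨mem_insert_self _ _, haC⟩, fun D ⟨hD, haD⟩ => ?_⟩
      rcases mem_insert.1 hD with rfl | hD
      exacts [rfl, absurd haD (hdisj D hD a haC)]
    · have haS : a ∈ S := (mem_insert.1 ha).resolve_left fun hae => haC (hae ▸ mem_insert_self e C)
      obtain ⟨D, hD, haD⟩ := h.exists_mem haS
      have hDC : D ≠ C := fun hDC => haC (mem_insert_of_mem (hDC ▸ haD))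
      refine ⟨D, ⟨mem_insert_of_mem (mem_erase.2 ⟨hDC, hD⟩), haD⟩, fun D' ⟨hD', haD'⟩ => ?_⟩
      rcases mem_insert.1 hD' with rfl | hD'
      exacts [absurd haD' haC, h.eq_of_mem_of_mem (mem_of_mem_erase hD') hD haD' haD]

lemma restrictPart_insertIntoBlock (he : e ∉ s) (hC : C ∈ insert ∅ ρ) :
    restrictPart (insertIntoBlock e ρ C) s = restrictPart ρ s :=
  restrictPart_insert_erase hC (insert_inter_of_notMem he)

lemma restrictPart_insertIntoBlock_self (h : IsPartOn S ρ) (he : e ∉ S)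
    (hC : C ∈ insert ∅ ρ) : restrictPart (insertIntoBlock e ρ C) S = ρ := by
  rw [restrictPart_insertIntoBlock he hC, restrictPart_eq_self h]

lemma blockOf_insertIntoBlock_inter (h : IsPartOn S ρ) (he : e ∉ S) (hC : C ∈ insert ∅ ρ) :
    blockOf (insertIntoBlock e ρ C) e ∩ S = C := by
  rw [(isPartOn_insertIntoBlock h he hC).blockOf_eq (mem_insert_self _ _) (mem_insert_self e C),
    insert_inter_of_notMem he, inter_eq_left.2]
  rcases mem_insert.1 hC with rfl | hC
  exacts [empty_subset S, h.subset_of_mem hC]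

lemma subset_insertIntoBlock_iff {F : Finset (Finset α)} (hF : ∀ b ∈ F, e ∉ b) :
    F ⊆ insertIntoBlock e ρ C ↔ F ⊆ ρ ∧ C ∉ F := by
  constructor
  · intro hFρ
    have hFC : ∀ b ∈ F, b ∈ ρ.erase C := fun b hb =>
      (mem_insert.1 (hFρ hb)).resolve_left fun hbC => hF b hb (hbC ▸ mem_insert_self e C)
    exact ⟨fun b hb => mem_of_mem_erase (hFC b hb), fun hC => notMem_erase C ρ (hFC C hC)⟩
  · rintro ⟨hFρ, hCF⟩ b hb
    exact mem_insert_of_mem (mem_erase.2 ⟨fun hbC => hCF (hbC ▸ hb), hFρ hb⟩)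

lemma inter_mem_insert_empty_restrictPart {D : Finset α} (hD : D ∈ ρ) :
    D ∩ S ∈ insert ∅ (restrictPart ρ S) := by
  by_cases hD0 : D ∩ S = ∅
  · exact hD0 ▸ mem_insert_self _ _
  · exact mem_insert_of_mem (mem_restrictPart.2 ⟨hD0, D, hD, rfl⟩)

lemma insertIntoBlock_restrictPart_blockOf (h : IsPartOn (insert e S) ρ) :
    insertIntoBlock e (restrictPart ρ S) (blockOf ρ e ∩ S) = ρ := by
  obtain ⟨D, hD, heD⟩ := h.exists_mem (mem_insert_self e S)
  rw [h.blockOf_eq hD heD]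
  have hDS : insert e (D ∩ S) = D := by
    rw [insert_inter_distrib, insert_eq_of_mem heD, inter_eq_left.2 (h.subset_of_mem hD)]
  have hother : ∀ E ∈ ρ, E ≠ D → E ∩ S = E := fun E hE hED =>
    inter_eq_left.2 fun a haE => (mem_insert.1 (h.subset_of_mem hE haE)).resolve_left
      fun hae => hED (h.eq_of_mem_of_mem hE hD (hae ▸ haE) heD)
  have herase : (restrictPart ρ S).erase (D ∩ S) = ρ.erase D := by
    ext E
    simp only [mem_erase, mem_restrictPart]
    constructor
    · rintro ⟨hED, -, F, hF, rfl⟩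
      have hFD : F ≠ D := fun hFD => hED (hFD ▸ rfl)
      exact ⟨fun hE => hFD (hE ▸ (hother F hF hFD).symm), (hother F hF hFD).symm ▸ hF⟩
    · rintro ⟨hED, hE⟩
      refine ⟨fun hE' => hED (h.eq_of_subset hE hD (hE' ▸ inter_subset_left)),
        (h.nonempty_of_mem hE).ne_empty, E, hE, hother E hE hED⟩
  rw [insertIntoBlock, hDS, herase, insert_erase hD]

end Insertion

section ChineseRestaurant

variable {α : Type*} [DecidableEq α] {σ θ : ℝ} {s S : Finset α} {π F ρ : Finset (Finset α)}
  {C : Finset α} {e : α}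

/-- Chinese-restaurant factor for seating a new customer at table `C` of `ρ`
(at a new table if `C = ∅`). -/
def seatFactor (σ θ : ℝ) (ρ : Finset (Finset α)) (C : Finset α) : ℝ :=
  if C = ∅ then θ + ρ.card * σ else C.card - σ

lemma epWeight_insertIntoBlock (h : IsPartOn S ρ) (he : e ∉ S) (hC : C ∈ insert ∅ ρ) :
    epWeight σ θ (insertIntoBlock e ρ C) = epWeight σ θ ρ * seatFactor σ θ ρ C := by
  have heρ : ∀ D ∈ ρ, e ∉ D := fun D hD heD => he (h.subset_of_mem hD heD)
  rcases mem_insert.1 hC with rfl | hC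
  · have hnew : ({e} : Finset α) ∉ ρ := fun he' => heρ _ he' (mem_singleton_self e)
    rw [insertIntoBlock, insert_empty_eq, erase_eq_of_notMem h.2.1, epWeight, epWeight,
      card_insert_of_notMem hnew, prod_range_succ, prod_insert hnew, seatFactor, if_pos rfl,
      card_singleton, Nat.sub_self, risingFac_zero]
    ring
  · have hC0 : C ≠ ∅ := (h.nonempty_of_mem hC).ne_empty
    have hnew : insert e C ∉ ρ.erase C := fun he' =>
      heρ _ (mem_of_mem_erase he') (mem_insert_self e C)
    obtain ⟨k, hk⟩ := Nat.exists_eq_add_one_of_ne_zero (card_ne_zero.2 (h.nonempty_of_mem hC))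
    rw [insertIntoBlock, epWeight, epWeight, card_insert_of_notMem hnew, card_erase_add_one hC,
      prod_insert hnew, ← mul_prod_erase ρ _ hC, card_insert_of_notMem (heρ C hC), hk,
      Nat.add_sub_cancel, Nat.add_sub_cancel, risingFac_succ, seatFactor, if_neg hC0, hk]
    push_cast
    ring

lemma sum_seatFactor (h : IsPartOn S ρ) (hF : F ⊆ ρ) :
    ∑ C ∈ insert ∅ (ρ \ F), seatFactor σ θ ρ C =
      θ + S.card - ∑ b ∈ F, (b.card : ℝ) + σ * F.card := by
  have hblocks : ∑ C ∈ ρ \ F, (C.card : ℝ) + ∑ b ∈ F, (b.card : ℝ) = S.card := by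
    rw [sum_sdiff hF]
    exact_mod_cast h.sum_card
  have hcard : ((ρ \ F).card : ℝ) + F.card = ρ.card := by
    exact_mod_cast card_sdiff_add_card_eq_card hF
  rw [sum_insert fun h0 => h.2.1 (mem_sdiff.1 h0).1, seatFactor, if_pos rfl,
    sum_congr rfl fun C hC => by
      rw [seatFactor, if_neg (h.nonempty_of_mem (mem_sdiff.1 hC).1).ne_empty],
    sum_sub_distrib, sum_const, nsmul_eq_mul]
  linear_combination hblocks - σ * hcard

def extensionsFixing (s : Finset α) (π F : Finset (Finset α)) (S : Finset α) :
    Finset (Finset (Finset α)) :=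
  S.powerset.powerset.filter fun ρ => IsPartOn S ρ ∧ restrictPart ρ s = π ∧ F ⊆ ρ

lemma mem_extensionsFixing :
    ρ ∈ extensionsFixing s π F S ↔ IsPartOn S ρ ∧ restrictPart ρ s = π ∧ F ⊆ ρ := by
  rw [extensionsFixing, mem_filter, mem_powerset, and_iff_right_iff_imp]
  exact fun h C hC => mem_powerset.2 (h.1.subset_of_mem hC)

lemma extensionsFixing_self (hπ : IsPartOn s π) (hF : F ⊆ π) :
    extensionsFixing s π F s = {π} := by
  ext ρ
  rw [mem_extensionsFixing, mem_singleton]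
  constructor
  · rintro ⟨hρ, rfl, -⟩
    exact (restrictPart_eq_self hρ).symm
  · rintro rfl
    exact ⟨hπ, restrictPart_eq_self hπ, hF⟩

/-- Every extension to `insert e S` arises from exactly one extension `ρ` to `S` by seating `e`
at a table of `ρ` outside `F` or at a new one. -/
lemma sum_extensionsFixing_insert {β : Type*} [AddCommMonoid β] (hπ : IsPartOn s π)
    (hF : F ⊆ π) (hsS : s ⊆ S) (he : e ∉ S) (f : Finset (Finset α) → β) :
    ∑ ρ ∈ extensionsFixing s π F (insert e S), f ρ =
      ∑ ρ ∈ extensionsFixing s π F S, ∑ C ∈ insert ∅ (ρ \ F), f (insertIntoBlock e ρ C) := by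
  have hes : e ∉ s := fun hes => he (hsS hes)
  have heF : ∀ b ∈ F, e ∉ b := fun b hb heb => hes (hπ.subset_of_mem (hF hb) heb)
  have h0F : (∅ : Finset α) ∉ F := fun h0 => hπ.2.1 (hF h0)
  have hadm : ∀ {ρ C}, C ∈ insert ∅ (ρ \ F) ↔ C ∈ insert ∅ ρ ∧ C ∉ F := by
    intro ρ C
    simp only [mem_insert, mem_sdiff]
    constructor
    · rintro (rfl | ⟨hC, hCF⟩)
      exacts [⟨Or.inl rfl, h0F⟩, ⟨Or.inr hC, hCF⟩]
    · rintro ⟨rfl | hC, hCF⟩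
      exacts [Or.inl rfl, Or.inr ⟨hC, hCF⟩]
  rw [sum_sigma']
  refine sum_bij' (fun ρ _ => ⟨restrictPart ρ S, blockOf ρ e ∩ S⟩)
    (fun p _ => insertIntoBlock e p.1 p.2) (fun ρ' hρ' => ?_) (fun p hp => ?_)
    (fun ρ' hρ' => ?_) (fun p hp => ?_) (fun ρ' hρ' => ?_)
  · obtain ⟨hρ', hres, hFρ'⟩ := mem_extensionsFixing.1 hρ'
    have hins := insertIntoBlock_restrictPart_blockOf hρ'
    obtain ⟨D, hD, heD⟩ := hρ'.exists_mem (mem_insert_self e S)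
    have hC : blockOf ρ' e ∩ S ∈ insert ∅ (restrictPart ρ' S) :=
      hρ'.blockOf_eq hD heD ▸ inter_mem_insert_empty_restrictPart hD
    rw [← hins, subset_insertIntoBlock_iff heF] at hFρ'
    rw [← hins, restrictPart_insertIntoBlock hes hC] at hres
    exact mem_sigma.2 ⟨mem_extensionsFixing.2
      ⟨isPartOn_restrictPart hρ' (subset_insert e S), hres, hFρ'.1⟩, hadm.2 ⟨hC, hFρ'.2⟩⟩
  · obtain ⟨hρ, hC⟩ := mem_sigma.1 hp
    obtain ⟨hρ, hres, hFρ⟩ := mem_extensionsFixing.1 hρ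
    obtain ⟨hC, hCF⟩ := hadm.1 hC
    exact mem_extensionsFixing.2 ⟨isPartOn_insertIntoBlock hρ he hC,
      (restrictPart_insertIntoBlock hes hC).trans hres,
      (subset_insertIntoBlock_iff heF).2 ⟨hFρ, hCF⟩⟩
  · exact insertIntoBlock_restrictPart_blockOf (mem_extensionsFixing.1 hρ').1
  · obtain ⟨hρ, hC⟩ := mem_sigma.1 hp
    have hρ := (mem_extensionsFixing.1 hρ).1
    have hC := (hadm.1 hC).1
    rw [restrictPart_insertIntoBlock_self hρ he hC, blockOf_insertIntoBlock_inter hρ he hC]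
  · rw [insertIntoBlock_restrictPart_blockOf (mem_extensionsFixing.1 hρ').1]

theorem sum_epWeight_extensionsFixing (hπ : IsPartOn s π) (hF : F ⊆ π) (hsS : s ⊆ S) :
    ∑ ρ ∈ extensionsFixing s π F S, epWeight σ θ ρ =
      epWeight σ θ π *
        risingFac (θ + s.card - ∑ b ∈ F, (b.card : ℝ) + σ * F.card) (S \ s).card := by
  set a := θ + s.card - ∑ b ∈ F, (b.card : ℝ) + σ * F.card
  suffices key : ∀ T : Finset α, Disjoint s T →
      ∑ ρ ∈ extensionsFixing s π F (s ∪ T), epWeight σ θ ρ = epWeight σ θ π * risingFac a T.card by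
    rw [← key _ disjoint_sdiff, union_sdiff_of_subset hsS]
  intro T
  induction T using Finset.induction_on with
  | empty =>
    intro _
    rw [union_empty, extensionsFixing_self hπ hF, sum_singleton, card_empty, risingFac_zero,
      mul_one]
  | insert e T heT ih =>
    intro hsT
    have he : e ∉ s ∪ T := fun he =>
      (mem_union.1 he).elim (disjoint_right.1 hsT (mem_insert_self e T)) heT
    have hsT' : Disjoint s T := disjoint_of_subset_right (subset_insert e T) hsT
    rw [union_insert, sum_extensionsFixing_insert hπ hF subset_union_left he,
      card_insert_of_notMem heT, risingFac_succ, ← mul_assoc, ← ih hsT', sum_mul]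
    refine sum_congr rfl fun ρ hρ => ?_
    obtain ⟨hρ, -, hFρ⟩ := mem_extensionsFixing.1 hρ
    rw [sum_congr rfl fun C hC =>
        epWeight_insertIntoBlock hρ he (insert_subset_insert ∅ sdiff_subset hC),
      ← mul_sum, sum_seatFactor hρ hFρ, card_union_of_disjoint hsT']
    push_cast
    ring

end ChineseRestaurant

section InclusionExclusion

lemma sum_Icc_neg_one_pow_mul_choose_mul_choose {u w N : ℕ} (hu : u ≤ N) :
    ∑ v ∈ Icc w N, (-1 : ℝ) ^ (v + w) * v.choose w * u.choose v = if u = w then 1 else 0 := by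
  have hterm : ∀ v ∈ Icc w N, (-1 : ℝ) ^ (v + w) * v.choose w * u.choose v =
      u.choose w * ((-1 : ℝ) ^ (v - w) * (u - w).choose (v - w)) := by
    intro v hv
    have hwv := (mem_Icc.1 hv).1
    have hchoose : (u.choose v * v.choose w : ℝ) = u.choose w * (u - w).choose (v - w) := by
      exact_mod_cast Nat.choose_mul hwv
    obtain ⟨k, rfl⟩ := Nat.exists_eq_add_of_le hwv
    rw [Nat.add_sub_cancel_left] at hchoose ⊢
    rw [show w + k + w = k + 2 * w by ring, pow_add, pow_mul, neg_one_sq, one_pow, mul_one]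
    linear_combination (-1 : ℝ) ^ k * hchoose
  rw [sum_congr rfl hterm, ← mul_sum]
  rcases lt_or_ge u w with huw | hwu
  · rw [Nat.choose_eq_zero_of_lt huw, if_neg huw.ne, Nat.cast_zero, zero_mul]
  obtain ⟨k, rfl⟩ := Nat.exists_eq_add_of_le hwu
  have halt : ∑ i ∈ range (k + 1), (-1 : ℝ) ^ i * k.choose i = if k = 0 then 1 else 0 := by
    exact_mod_cast Int.alternating_sum_range_choose (n := k)
  rw [← Ico_add_one_right_eq_Icc, sum_Ico_eq_sum_range, Nat.add_sub_cancel_left]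
  simp_rw [Nat.add_sub_cancel_left]
  rw [← sum_subset (range_subset_range.2 (by omega : k + 1 ≤ N + 1 - w)) fun i _ hi => by
    rw [Nat.choose_eq_zero_of_lt (by simpa using hi), Nat.cast_zero, mul_zero], halt]
  by_cases hk : k = 0 <;> simp [hk]

lemma ite_card_filter_not_eq {ι : Type*} [Fintype ι] (p : ι → Prop) [DecidablePred p] {x : ℕ}
    (hx : x ≤ Fintype.card ι) :
    (if (univ.filter fun i => ¬ p i).card = x then (1 : ℝ) else 0) =
      (-1 : ℝ) ^ Fintype.card ι *
        ∑ v ∈ Icc (Fintype.card ι - x) (Fintype.card ι),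
          (v.choose (Fintype.card ι - x) : ℝ) * (-1 : ℝ) ^ (v + x) *
            ∑ c ∈ (univ : Finset ι).powersetCard v, if ∀ i ∈ c, p i then (1 : ℝ) else 0 := by
  set N := Fintype.card ι
  set Z := univ.filter p
  have hZ : Z.card ≤ N := card_filter_le _ _
  have hcompl : (univ.filter fun i => ¬ p i).card = N - Z.card := by
    rw [filter_not, card_sdiff_of_subset (filter_subset _ _), card_univ]
  have hinner : ∀ v, ∑ c ∈ (univ : Finset ι).powersetCard v,
      (if ∀ i ∈ c, p i then (1 : ℝ) else 0) = Z.card.choose v := by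
    intro v
    rw [sum_boole, ← card_powersetCard]
    congr 2
    ext c
    simp [Z, subset_iff, and_comm]
  have hsign : ∀ v ∈ Icc (N - x) N, (-1 : ℝ) ^ N * (v.choose (N - x) * (-1) ^ (v + x) *
      Z.card.choose v) = (-1) ^ (v + (N - x)) * v.choose (N - x) * Z.card.choose v := by
    intro v _
    have hpow : (-1 : ℝ) ^ (N + (v + x)) = (-1) ^ (v + (N - x)) := by
      rw [show N + (v + x) = v + (N - x) + 2 * x by omega, pow_add _ (v + (N - x)), pow_mul,
        neg_one_sq, one_pow, mul_one]
    rw [← hpow, pow_add]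
    ring
  simp_rw [hinner]
  rw [hcompl, mul_sum, sum_congr rfl hsign, sum_Icc_neg_one_pow_mul_choose_mul_choose hZ]
  exact if_congr (by omega) rfl rfl

end InclusionExclusion

section Fibers

variable {α β : Type*} [DecidableEq α] [DecidableEq β] {s S : Finset α} {g : α → β}

def fiberPart (g : α → β) (S : Finset α) : Finset (Finset α) :=
  S.image fun a => S.filter (g · = g a)

lemma isPartOn_fiberPart (g : α → β) (S : Finset α) : IsPartOn S (fiberPart g S) := by
  refine ⟨fun C hC => ?_, fun h0 => ?_, fun a ha => ⟨S.filter (g · = g a), ⟨mem_image_of_mem _ ha,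
    mem_filter.2 ⟨ha, rfl⟩⟩, fun D ⟨hD, haD⟩ => ?_⟩⟩
  · obtain ⟨a, -, rfl⟩ := mem_image.1 hC
    exact filter_subset _ _
  · obtain ⟨a, ha, h⟩ := mem_image.1 h0
    exact notMem_empty a (h ▸ mem_filter.2 ⟨ha, rfl⟩)
  · obtain ⟨b, -, rfl⟩ := mem_image.1 hD
    rw [(mem_filter.1 haD).2]

lemma restrictPart_fiberPart (hs : s ⊆ S) :
    restrictPart (fiberPart g S) s = fiberPart g s := by
  have htrace : ∀ b, S.filter (g · = g b) ∩ s = s.filter (g · = g b) := fun b => by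
    rw [filter_inter, inter_eq_right.2 hs]
  ext D
  simp only [mem_restrictPart, fiberPart, mem_image, exists_exists_and_eq_and, htrace]
  constructor
  · rintro ⟨hD, b, -, rfl⟩
    obtain ⟨a, ha⟩ := nonempty_iff_ne_empty.2 hD
    obtain ⟨has, hab⟩ := mem_filter.1 ha
    exact ⟨a, has, by rw [hab]⟩
  · rintro ⟨a, ha, rfl⟩
    exact ⟨ne_empty_of_mem (mem_filter.2 ⟨ha, rfl⟩), a, hs ha, rfl⟩

omit [DecidableEq β] in
lemma fiberPart_eq {P : Finset (Finset α)} {g : α → Finset α} (hP : IsPartOn s P)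
    (hg : ∀ C ∈ P, ∀ a ∈ C, g a = C) : fiberPart g s = P := by
  have hfiber : ∀ C ∈ P, ∀ a ∈ C, s.filter (g · = g a) = C := by
    intro C hC a ha
    ext b
    rw [mem_filter, hg C hC a ha]
    constructor
    · rintro ⟨hb, hbC⟩
      obtain ⟨D, hD, hbD⟩ := hP.exists_mem hb
      rwa [← hbC, hg D hD b hbD]
    · exact fun hb => ⟨hP.subset_of_mem hC hb, hg C hC b hb⟩
  ext C
  rw [fiberPart, mem_image]
  constructor
  · rintro ⟨a, ha, rfl⟩
    obtain ⟨D, hD, haD⟩ := hP.exists_mem ha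
    rwa [hfiber D hD a haD]
  · intro hC
    obtain ⟨a, ha⟩ := hP.nonempty_of_mem hC
    exact ⟨a, hP.subset_of_mem hC ha, hfiber C hC a ha⟩

end Fibers

section Sample

variable {n m j : ℕ} {σ θ : ℝ} {π ρ : Finset (Finset (Fin (n + m)))}
  {B : Fin j → Finset (Fin (n + m))}

lemma card_oldSet : (oldSet n m).card = n := by
  rw [oldSet, Fin.card_filter_val_lt]
  omega

lemma card_univ_sdiff_oldSet : (univ \ oldSet n m).card = m := by
  rw [card_sdiff_of_subset (subset_univ _), card_univ, Fintype.card_fin, card_oldSet]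
  omega

lemma mem_extensions :
    ρ ∈ extensions n m π ↔ IsPartOn univ ρ ∧ restrictPart ρ (oldSet n m) = π := by
  simp [extensions]

lemma extensions_eq_extensionsFixing (π : Finset (Finset (Fin (n + m)))) :
    extensions n m π = extensionsFixing (oldSet n m) π ∅ univ := by
  ext ρ
  simp [extensions, mem_extensionsFixing]

lemma Scount_eq_card_sdiff {S b C : Finset (Fin (n + m))} (hρ : IsPartOn S ρ) (hC : C ∈ ρ)
    (hb : b.Nonempty) (hbC : b ⊆ C) : Scount n m b ρ = (C \ oldSet n m).card := by
  rw [Scount, ← sum_singleton (fun C => (C \ oldSet n m).card) C]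
  congr 1
  convert hρ.filter_subset_eq_singleton hC hb hbC

lemma Scount_eq_zero_iff {b : Finset (Fin (n + m))} (hρ : ρ ∈ extensions n m π) (hb : b ∈ π) :
    Scount n m b ρ = 0 ↔ b ∈ ρ := by
  obtain ⟨hρ, hres⟩ := mem_extensions.1 hρ
  obtain ⟨hb0, C, hC, rfl⟩ := mem_restrictPart.1 (hres ▸ hb)
  rw [Scount_eq_card_sdiff hρ hC (nonempty_iff_ne_empty.2 hb0) inter_subset_left, card_eq_zero,
    sdiff_eq_empty_iff_subset]
  constructor
  · intro hCold
    rwa [inter_eq_left.2 hCold]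
  · intro hCρ
    rw [← hρ.eq_of_subset hCρ hC inter_subset_left]
    exact inter_subset_right

lemma filter_extensions_eq_extensionsFixing {c : Finset (Fin j)} (hB : ∀ i ∈ c, B i ∈ π) :
    (extensions n m π).filter (fun ρ => ∀ i ∈ c, Scount n m (B i) ρ = 0) =
      extensionsFixing (oldSet n m) π (c.image B) univ := by
  ext ρ
  rw [mem_filter, mem_extensionsFixing, image_subset_iff, ← and_assoc, ← mem_extensions]
  exact and_congr_right fun hρ => forall₂_congr fun i hi => Scount_eq_zero_iff hρ (hB i hi)

lemma sum_epWeight_extensions (hπ : IsPartOn (oldSet n m) (image B univ)) :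
    ∑ ρ ∈ extensions n m (image B univ), epWeight σ θ ρ =
      epWeight σ θ (image B univ) * risingFac (θ + n) m := by
  rw [extensions_eq_extensionsFixing, sum_epWeight_extensionsFixing hπ (empty_subset _)
    (subset_univ _), card_oldSet, card_univ_sdiff_oldSet]
  simp

lemma sum_epWeight_filter_Scount_eq_zero (hπ : IsPartOn (oldSet n m) (image B univ))
    (hBinj : Function.Injective B) (c : Finset (Fin j)) :
    ∑ ρ ∈ (extensions n m (image B univ)).filter (fun ρ => ∀ i ∈ c, Scount n m (B i) ρ = 0),
      epWeight σ θ ρ =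
    epWeight σ θ (image B univ) *
      risingFac (θ + n - ∑ i ∈ c, ((B i).card : ℝ) + σ * c.card) m := by
  rw [filter_extensions_eq_extensionsFixing fun i _ => mem_image_of_mem B (mem_univ i),
    sum_epWeight_extensionsFixing hπ (image_subset_iff.2 fun i _ => mem_image_of_mem B (mem_univ i))
      (subset_univ _), sum_image hBinj.injOn, card_image_of_injective c hBinj, card_oldSet,
    card_univ_sdiff_oldSet]

lemma sum_ite_RcntB_mul_epWeight (hπ : IsPartOn (oldSet n m) (image B univ))
    (hBinj : Function.Injective B) {x : ℕ} (hx : x ≤ j) :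
    ∑ ρ ∈ extensions n m (image B univ),
      (if RcntB n m j B ρ = x then (1 : ℝ) else 0) * epWeight σ θ ρ =
    epWeight σ θ (image B univ) * ((-1 : ℝ) ^ j *
      ∑ v ∈ Icc (j - x) j, (v.choose (j - x) : ℝ) * (-1 : ℝ) ^ (v + x) *
        ∑ c ∈ (univ : Finset (Fin j)).powersetCard v,
          risingFac (θ + n - ∑ i ∈ c, ((B i).card : ℝ) + σ * v) m) := by
  have hIE : ∀ ρ, (if RcntB n m j B ρ = x then (1 : ℝ) else 0) =
      (-1 : ℝ) ^ j * ∑ v ∈ Icc (j - x) j, (v.choose (j - x) : ℝ) * (-1 : ℝ) ^ (v + x) *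
        ∑ c ∈ (univ : Finset (Fin j)).powersetCard v,
          if ∀ i ∈ c, Scount n m (B i) ρ = 0 then (1 : ℝ) else 0 := fun ρ => by
    convert ite_card_filter_not_eq (fun i => Scount n m (B i) ρ = 0)
      ((Fintype.card_fin j).symm ▸ hx) using 1
    · simp only [RcntB, Ne]
    · -- the two sides differ only in their `Decidable` instances
      simp only [Fintype.card_fin]
      congr!
  have hfix : ∀ v, ∀ c ∈ (univ : Finset (Fin j)).powersetCard v,
      ∑ ρ ∈ extensions n m (image B univ),
        (if ∀ i ∈ c, Scount n m (B i) ρ = 0 then (1 : ℝ) else 0) * epWeight σ θ ρ =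
      epWeight σ θ (image B univ) *
        risingFac (θ + n - ∑ i ∈ c, ((B i).card : ℝ) + σ * v) m := fun v c hc => by
    rw [← (mem_powersetCard.1 hc).2, ← sum_epWeight_filter_Scount_eq_zero hπ hBinj, sum_filter]
    simp_rw [boole_mul]
  calc ∑ ρ ∈ extensions n m (image B univ),
        (if RcntB n m j B ρ = x then (1 : ℝ) else 0) * epWeight σ θ ρ
      = (-1 : ℝ) ^ j * ∑ v ∈ Icc (j - x) j, (v.choose (j - x) : ℝ) * (-1 : ℝ) ^ (v + x) *
          ∑ c ∈ (univ : Finset (Fin j)).powersetCard v, ∑ ρ ∈ extensions n m (image B univ),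
            (if ∀ i ∈ c, Scount n m (B i) ρ = 0 then (1 : ℝ) else 0) * epWeight σ θ ρ := by
        simp only [hIE, sum_mul, mul_sum, mul_assoc]
        rw [sum_comm]
        refine sum_congr rfl fun v _ => ?_
        rw [sum_comm]
    _ = _ := by
        conv_rhs => rw [mul_left_comm, mul_sum]
        congr 1
        refine sum_congr rfl fun v _ => ?_
        conv_rhs => rw [mul_left_comm, mul_sum]
        congr 1
        exact sum_congr rfl fun c hc => hfix v c hc

lemma exists_mem_extensions_RcntB_eq (hπ : IsPartOn (oldSet n m) (image B univ))
    (hBinj : Function.Injective B) {x : ℕ} (hxj : x ≤ j) (hxm : x ≤ m) :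
    ∃ ρ ∈ extensions n m (image B univ), RcntB n m j B ρ = x := by
  -- old elements are labelled by their block, the new element `n + i` by `B i` for `i < x`,
  -- and all later new elements by `∅`, i.e. they form one fresh block
  let g : Fin (n + m) → Finset (Fin (n + m)) := fun a =>
    if a ∈ oldSet n m then blockOf (image B univ) a
    else if h : (a : ℕ) - n < x then B ⟨a - n, by omega⟩ else ∅
  have hmemB : ∀ i, B i ∈ image B univ := fun i => mem_image_of_mem B (mem_univ i)
  have hgB : ∀ i, ∀ a ∈ B i, g a = B i := fun i a ha => by
    simp only [g, if_pos (hπ.subset_of_mem (hmemB i) ha), hπ.blockOf_eq (hmemB i) ha]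
  have hρ : fiberPart g univ ∈ extensions n m (image B univ) := by
    rw [mem_extensions, restrictPart_fiberPart (subset_univ _), fiberPart_eq hπ]
    · exact ⟨isPartOn_fiberPart g univ, rfl⟩
    · intro C hC a ha
      obtain ⟨i, -, rfl⟩ := mem_image.1 hC
      exact hgB i a ha
  have hreobs : ∀ i, Scount n m (B i) (fiberPart g univ) ≠ 0 ↔ (i : ℕ) < x := by
    intro i
    obtain ⟨a₀, ha₀⟩ := hπ.nonempty_of_mem (hmemB i)
    have hC : (univ : Finset (Fin (n + m))).filter (g · = B i) ∈ fiberPart g univ := by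
      rw [← hgB i a₀ ha₀]
      exact mem_image_of_mem _ (mem_univ a₀)
    rw [Scount_eq_card_sdiff (isPartOn_fiberPart g univ) hC ⟨a₀, ha₀⟩
      fun a ha => mem_filter.2 ⟨mem_univ a, hgB i a ha⟩, card_ne_zero]
    constructor
    · rintro ⟨a, ha⟩
      obtain ⟨ha, hold⟩ := mem_sdiff.1 ha
      have hga := (mem_filter.1 ha).2
      simp only [g, if_neg hold] at hga
      split_ifs at hga with hax
      · rw [← hBinj hga]
        exact hax
      · exact absurd hga.symm (hπ.nonempty_of_mem (hmemB i)).ne_empty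
    · intro hix
      have hnew : (⟨n + i, by omega⟩ : Fin (n + m)) ∉ oldSet n m := by simp [oldSet]
      refine ⟨⟨n + i, by omega⟩, mem_sdiff.2 ⟨mem_filter.2 ⟨mem_univ _, ?_⟩, hnew⟩⟩
      simp only [g, if_neg hnew, Nat.add_sub_cancel_left, dif_pos hix]
  refine ⟨fiberPart g univ, hρ, ?_⟩
  rw [RcntB, filter_congr fun i _ => hreobs i, Fin.card_filter_val_lt]
  omega

lemma condExpPi_EPV {θ : ℝ} (hθ : risingFac θ (n + m) ≠ 0) (f : Finset (Finset (Fin (n + m))) → ℝ) :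
    condExpPi σ (EPV σ θ) n m π f =
      (∑ ρ ∈ extensions n m π, f ρ * epWeight σ θ ρ) / ∑ ρ ∈ extensions n m π, epWeight σ θ ρ := by
  simp only [condExpPi, gibbsW_EPV, mul_div_assoc', ← sum_div]
  exact div_div_div_cancel_right₀ hθ _ _

lemma condExpPi_pos {V : ℕ → ℕ → ℝ} {f : Finset (Finset (Fin (n + m))) → ℝ}
    (hw : ∀ ρ ∈ extensions n m π, 0 < gibbsW σ (V (n + m)) ρ)
    (hf : ∀ ρ ∈ extensions n m π, 0 ≤ f ρ) (hpos : ∃ ρ ∈ extensions n m π, 0 < f ρ) :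
    0 < condExpPi σ V n m π f := by
  obtain ⟨ρ₀, hρ₀, hfρ₀⟩ := hpos
  exact div_pos (sum_pos' (fun ρ hρ => mul_nonneg (hf ρ hρ) (hw ρ hρ).le)
    ⟨ρ₀, hρ₀, mul_pos hfρ₀ (hw ρ₀ hρ₀)⟩) (sum_pos hw ⟨ρ₀, hρ₀⟩)

end Sample

theorem looking_backward_prob_complete_EP_general
    (n m j : ℕ) (hn : 1 ≤ n)
    (σ θ : ℝ) (hσ0 : 0 < σ) (hσ1 : σ < 1) (hθ : -σ < θ)
    (B : Fin j → Finset (Fin (n + m))) (hBinj : Function.Injective B)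
    (hπ : IsPartOn (oldSet n m) (Finset.image B Finset.univ))
    (hVnj : 0 < EPV σ θ n j)
    (x : ℕ) (hx : x ≤ min j m) :
    (condExpPi σ (EPV σ θ) n m (Finset.image B Finset.univ)
        (fun ρ => if RcntB n m j B ρ = x then (1 : ℝ) else 0) =
      (1 / risingFac (θ + n) m) * (-1 : ℝ) ^ j *
        ∑ v ∈ Finset.Icc (j - x) j,
          (Nat.choose v (j - x) : ℝ) * (-1 : ℝ) ^ (v + x) *
            ∑ c ∈ (Finset.univ : Finset (Fin j)).powersetCard v,
              risingFac (θ + (n : ℝ) - (∑ i ∈ c, ((B i).card : ℝ)) + σ * v) m) ∧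
    0 < condExpPi σ (EPV σ θ) n m (Finset.image B Finset.univ)
        (fun ρ => if RcntB n m j B ρ = x then (1 : ℝ) else 0) := by
  have hold : (oldSet n m).Nonempty := card_pos.1 (card_oldSet.symm ▸ hn)
  have hj : j ≠ 0 := by
    rintro rfl
    simpa using hπ.nonempty hold
  have hθ0 : θ ≠ 0 := by
    rintro rfl
    exact hVnj.ne' (EPV_theta_zero hj)
  have hρne : ∀ ρ ∈ extensions n m (image B univ), ρ.Nonempty := fun ρ hρ =>
    (mem_extensions.1 hρ).1.nonempty (hold.mono (subset_univ _))
  have hxj : x ≤ j := hx.trans (min_le_left _ _)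
  obtain ⟨ρ₀, hρ₀, hR⟩ := exists_mem_extensions_RcntB_eq hπ hBinj hxj (hx.trans (min_le_right _ _))
  refine ⟨?_, condExpPi_pos (fun ρ hρ => ?_) (fun ρ _ => ?_) ⟨ρ₀, hρ₀, by simp [hR]⟩⟩
  · rw [condExpPi_EPV (risingFac_ne_zero hθ0 (by linarith) _),
      sum_ite_RcntB_mul_epWeight hπ hBinj hxj, sum_epWeight_extensions hπ,
      mul_div_mul_left _ _ (epWeight_ne_zero hσ0.le hσ1 hθ hθ0 (hπ.nonempty hold))]
    ring
  · exact gibbsW_EPV_pos hσ0.le hσ1 hθ hθ0 (by omega) (hρne ρ hρ)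
  · split_ifs <;> norm_num

/-- Ewens–Pitman, distribution of the number of re-observed old species,
given complete information, with strict positivity. -/
theorem looking_backward_prob_complete_EP
    (n m j : ℕ) (hn : 1 ≤ n) (hm : 1 ≤ m)
    (σ θ : ℝ) (hσ0 : 0 < σ) (hσ1 : σ < 1) (hθ : -σ < θ)
    (B : Fin j → Finset (Fin (n + m))) (hBinj : Function.Injective B)
    (hπ : IsPartOn (oldSet n m) (Finset.image B Finset.univ))
    (hVnj : 0 < EPV σ θ n j)
    (x : ℕ) (hx : x ≤ min j m) :
    (condExpPi σ (EPV σ θ) n m (Finset.image B Finset.univ)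
        (fun ρ => if RcntB n m j B ρ = x then (1 : ℝ) else 0) =
      (1 / risingFac (θ + n) m) * (-1 : ℝ) ^ j *
        ∑ v ∈ Finset.Icc (j - x) j,
          (Nat.choose v (j - x) : ℝ) * (-1 : ℝ) ^ (v + x) *
            ∑ c ∈ (Finset.univ : Finset (Fin j)).powersetCard v,
              risingFac (θ + (n : ℝ) - (∑ i ∈ c, ((B i).card : ℝ)) + σ * v) m) ∧
    0 < condExpPi σ (EPV σ θ) n m (Finset.image B Finset.univ)
        (fun ρ => if RcntB n m j B ρ = x then (1 : ℝ) else 0) :=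
  looking_backward_prob_complete_EP_general n m j hn σ θ hσ0 hσ1 hθ B hBinj hπ hVnj x hx
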